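/- Let S, G, T ∈ ℝ^{l×l} be symmetric positive definite with T ⪰ S G⁻¹ S, and let P be the rank-r spectral projection of S. Then trace(S T⁻¹ P) ≤ trace(G S⁻¹ P). -/

import Mathlib

/-!
Since `T ⪰ S G⁻¹ S ≻ 0`, inversion reverses the Loewner order: `S⁻¹ G S⁻¹ ⪰ T⁻¹`.
The spectral projection `P` commutes with `S`, so `S P = P S P ⪰ 0`, and the trace pairing of
a Loewner inequality with a positive semidefinite matrix is monotone. Hence
`tr (T⁻¹ S P) ≤ tr (S⁻¹ G S⁻¹ S P)`, and cycling the traces gives the two sides of the claim.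
-/

open Matrix

noncomputable def indDiag (l r : ℕ) : Matrix (Fin l) (Fin l) ℝ :=
  Matrix.diagonal (fun i => if (i : ℕ) < r then (1 : ℝ) else 0)

namespace Matrix

variable {n R 𝕜 : Type*} [Fintype n]

section RCLike

open scoped ComplexOrder

variable [DecidableEq n] [RCLike 𝕜]

open scoped MatrixOrder in
theorem PosSemidef.trace_mul_nonneg {A B : Matrix n n 𝕜} (hA : A.PosSemidef)
    (hB : B.PosSemidef) : 0 ≤ (A * B).trace := by
  obtain ⟨C, rfl⟩ := CStarAlgebra.nonneg_iff_eq_star_mul_self.mp hB.nonneg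
  rw [← Matrix.mul_assoc, trace_mul_comm, ← Matrix.mul_assoc, star_eq_conjTranspose]
  exact (hA.mul_mul_conjTranspose_same C).trace_nonneg

theorem PosSemidef.trace_mul_le_trace_mul {A B C : Matrix n n 𝕜} (hAB : (B - A).PosSemidef)
    (hC : C.PosSemidef) : (A * C).trace ≤ (B * C).trace := by
  have h := hAB.trace_mul_nonneg hC
  rwa [Matrix.sub_mul, trace_sub, sub_nonneg] at h

theorem PosDef.inv_sub_inv_posSemidef {A B : Matrix n n 𝕜} (hA : A.PosDef) (hB : B.PosDef)
    (hAB : (B - A).PosSemidef) : (A⁻¹ - B⁻¹).PosSemidef := by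
  have hAu : IsUnit A.det := (isUnit_iff_isUnit_det A).mp hA.isUnit
  have hBu : IsUnit B.det := (isUnit_iff_isUnit_det B).mp hB.isUnit
  -- `A⁻¹ - B⁻¹ = Xᴴ A X + B⁻¹ (B - A) B⁻¹` with `X = A⁻¹ - B⁻¹`
  have key : (A⁻¹ - B⁻¹)ᴴ * A * (A⁻¹ - B⁻¹) + (B⁻¹)ᴴ * (B - A) * B⁻¹ = A⁻¹ - B⁻¹ := by
    simp only [conjTranspose_sub, hA.inv.isHermitian.eq, hB.inv.isHermitian.eq, Matrix.sub_mul,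
      Matrix.mul_sub, nonsing_inv_mul _ hAu, nonsing_inv_mul _ hBu, Matrix.one_mul,
      mul_nonsing_inv_cancel_right _ _ hAu]
    abel
  rw [← key]
  exact (hA.posSemidef.conjTranspose_mul_mul_same _).add (hAB.conjTranspose_mul_mul_same _)

end RCLike

theorem PosSemidef.mul_of_commute_of_isStarProjection [Ring R] [PartialOrder R] [StarRing R]
    {S P : Matrix n n R} (hS : S.PosSemidef) (hP : IsStarProjection P) (hSP : Commute S P) :
    (S * P).PosSemidef := by
  have h : S * P = Pᴴ * S * P := by
    rw [← star_eq_conjTranspose, hP.isSelfAdjoint.star_eq, ← hSP.eq, Matrix.mul_assoc,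
      hP.isIdempotentElem.eq]
  rw [h]
  exact hS.conjTranspose_mul_mul_same P

theorem isStarProjection_mul_mul_transpose [DecidableEq n] [Semiring R] [StarRing R]
    [TrivialStar R] {E V : Matrix n n R} (hE : IsStarProjection E) (hV : Vᵀ * V = 1) :
    IsStarProjection (V * E * Vᵀ) where
  isIdempotentElem := by
    rw [IsIdempotentElem]
    simp only [Matrix.mul_assoc]
    rw [← Matrix.mul_assoc Vᵀ, hV, Matrix.one_mul, ← Matrix.mul_assoc E, hE.isIdempotentElem.eq]
  isSelfAdjoint := by
    have h := isHermitian_mul_mul_conjTranspose V hE.isSelfAdjoint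
    rwa [conjTranspose_eq_transpose_of_trivial] at h

theorem commute_mul_diagonal_mul_transpose [DecidableEq n] [CommSemiring R]
    {V : Matrix n n R} (hV : Vᵀ * V = 1) (a b : n → R) :
    Commute (V * diagonal a * Vᵀ) (V * diagonal b * Vᵀ) := by
  have h : ∀ a b : n → R, V * diagonal a * Vᵀ * (V * diagonal b * Vᵀ) =
      V * diagonal (a * b) * Vᵀ := fun a b => by
    simp only [Matrix.mul_assoc]
    rw [← Matrix.mul_assoc Vᵀ, hV, Matrix.one_mul, ← Matrix.mul_assoc (diagonal a),
      diagonal_mul_diagonal]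
    rfl
  rw [Commute, SemiconjBy, h, h, mul_comm]

end Matrix

theorem isStarProjection_indDiag (l r : ℕ) : IsStarProjection (indDiag l r) where
  isIdempotentElem := by
    rw [IsIdempotentElem, indDiag, diagonal_mul_diagonal]
    congr 1
    funext i
    split_ifs <;> simp
  isSelfAdjoint := isHermitian_diagonal _

theorem mpz_rr_le_mai_rr_general
    (l r : ℕ)
    (S G T V : Matrix (Fin l) (Fin l) ℝ) (d : Fin l → ℝ)
    (hSpd : S.PosDef)
    (hGpd : G.PosDef)
    (hTpd : T.PosDef)
    (hLoewner : (T - S * G⁻¹ * S).PosSemidef)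
    (hV : Vᵀ * V = 1)
    (hSdec : S = V * Matrix.diagonal d * Vᵀ)
    (P : Matrix (Fin l) (Fin l) ℝ) (hP : P = V * indDiag l r * Vᵀ) :
    (S * T⁻¹ * P).trace ≤ (G * S⁻¹ * P).trace := by
  have hSu : IsUnit S.det := (isUnit_iff_isUnit_det S).mp hSpd.isUnit
  have hM : (S * G⁻¹ * S).PosDef := by
    have h := hGpd.inv.conjTranspose_mul_mul_same (mulVec_injective_of_isUnit hSpd.isUnit)
    rwa [hSpd.isHermitian.eq] at h
  have hMinv : (S * G⁻¹ * S)⁻¹ = S⁻¹ * G * S⁻¹ := by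
    rw [Matrix.mul_inv_rev, Matrix.mul_inv_rev,
      nonsing_inv_nonsing_inv G ((isUnit_iff_isUnit_det G).mp hGpd.isUnit), Matrix.mul_assoc]
  have hN : (S⁻¹ * G * S⁻¹ - T⁻¹).PosSemidef := hMinv ▸ hM.inv_sub_inv_posSemidef hTpd hLoewner
  have hSP : Commute S P := hSdec ▸ hP ▸ commute_mul_diagonal_mul_transpose hV d _
  have hSPpsd : (S * P).PosSemidef := hSpd.posSemidef.mul_of_commute_of_isStarProjection
    (hP ▸ isStarProjection_mul_mul_transpose (isStarProjection_indDiag l r) hV) hSP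
  calc (S * T⁻¹ * P).trace = (T⁻¹ * (P * S)).trace := by
        rw [trace_mul_cycle, trace_mul_comm]
    _ ≤ (S⁻¹ * G * S⁻¹ * (P * S)).trace := hSP.eq ▸ hN.trace_mul_le_trace_mul hSPpsd
    _ = (G * S⁻¹ * P).trace := by
        rw [Matrix.mul_assoc (S⁻¹ * G), Matrix.mul_assoc S⁻¹, trace_mul_comm S⁻¹]
        simp only [Matrix.mul_assoc, mul_nonsing_inv _ hSu, Matrix.mul_one]

/-- if T ⪰ S G⁻¹ S then trace(S T⁻¹ P) ≤ trace(G S⁻¹ P), where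
P is the rank-r spectral projection of S. -/
theorem mpz_rr_le_mai_rr
    (l r : ℕ) (hr1 : 1 ≤ r) (hrl : r ≤ l)
    (S G T V : Matrix (Fin l) (Fin l) ℝ) (d : Fin l → ℝ)
    (hSsym : S.IsSymm) (hSpd : S.PosDef)
    (hGsym : G.IsSymm) (hGpd : G.PosDef)
    (hTsym : T.IsSymm) (hTpd : T.PosDef)
    (hLoewner : (T - S * G⁻¹ * S).PosSemidef)
    (hV : Vᵀ * V = 1) (hd : Antitone d)
    (hSdec : S = V * Matrix.diagonal d * Vᵀ)
    (P : Matrix (Fin l) (Fin l) ℝ) (hP : P = V * indDiag l r * Vᵀ) :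
    (S * T⁻¹ * P).trace ≤ (G * S⁻¹ * P).trace :=
  mpz_rr_le_mai_rr_general l r S G T V d hSpd hGpd hTpd hLoewner hV hSdec P hP
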